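/- Let Ω ⊂ ℝ^d be a bounded, open, connected Lipschitz domain with d ≥ 2, and let b_1, …, b_n be continuous vector fields on the closure of Ω with values in ℝ^d such that b_1, …, b_k are conservative (each b_i = ∇ν_i for some function, equivalently its circulation ∫_0^1 b_i(γ)·γ' along a C^1 path γ in Ω depends only on the endpoints of γ) and b_{k+1}, …, b_n are not conservative. Define B ∈ C^0 with values in ℝ^{n×d×n} by B_{iji} = (b_i)_j and B_{ijk} = 0 for i ≠ k. Then B is k-conservative, and in fact E_B^x = span{e_1, …, e_k} for every x ∈ Ω. -/

import Mathlib

open MeasureTheory Metric Set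
open scoped ENNReal NNReal BigOperators

noncomputable section

/-- Points of `ℝ^d`. -/
abbrev Pt (d : ℕ) := EuclideanSpace ℝ (Fin d)

/-- A bounded, open, connected Lipschitz domain of `ℝ^d`: near each boundary point the set
is, in a suitable direction, the open hypograph of a Lipschitz function. -/
def IsLipschitzDomain {d : ℕ} (Ω : Set (Pt d)) : Prop :=
  IsOpen Ω ∧ IsConnected Ω ∧ Bornology.IsBounded Ω ∧
    ∀ x ∈ frontier Ω, ∃ r : ℝ, 0 < r ∧ ∃ v : Pt d, ‖v‖ = 1 ∧
      ∃ (L : NNReal) (g : Pt d → ℝ), LipschitzWith L g ∧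
        ∀ y ∈ Metric.ball x r, (y ∈ Ω ↔ g (y - (inner ℝ y v : ℝ) • v) < (inner ℝ y v : ℝ))

/-- A `C¹` curve in `Ω` from `x` to `y`, parametrized on `[0,1]`. -/
def IsCurve {d : ℕ} (Ω : Set (Pt d)) (x y : Pt d) (γ : ℝ → Pt d) : Prop :=
  ContDiffOn ℝ 1 γ (Set.Icc 0 1) ∧ (∀ t ∈ Set.Icc (0:ℝ) 1, γ t ∈ Ω) ∧ γ 0 = x ∧ γ 1 = y

/-- `φ` solves the transport ODE `φ' = -((B∘γ)·φ)·γ'` on `[0,1]`. -/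
def SolvesTransport {d n : ℕ} (B : Pt d → Fin n → Fin d → Fin n → ℝ)
    (γ : ℝ → Pt d) (φ : ℝ → Fin n → ℝ) : Prop :=
  ∀ t ∈ Set.Icc (0:ℝ) 1, HasDerivWithinAt φ
    (fun i => - ∑ j, ∑ k, B (γ t) i j k * φ t k * (derivWithin γ (Set.Icc 0 1) t) j)
    (Set.Icc 0 1) t

/-- The relation `R^γ_B(v) = w`: a solution of the transport ODE joins `v` to `w`. -/
def Transports {d n : ℕ} (B : Pt d → Fin n → Fin d → Fin n → ℝ)
    (γ : ℝ → Pt d) (v w : Fin n → ℝ) : Prop :=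
  ∃ φ : ℝ → Fin n → ℝ, SolvesTransport B γ φ ∧ φ 0 = v ∧ φ 1 = w

/-- The set `E_B^x` of vectors whose transport along curves starting at `x` depends only on
the end point: `R^{γ₁}_B(v) = R^{γ₂}_B(v)` for all `y ∈ Ω` and all curves `γ₁, γ₂` from `x`
to `y`. -/
def EB {d n : ℕ} (Ω : Set (Pt d)) (B : Pt d → Fin n → Fin d → Fin n → ℝ)
    (x : Pt d) : Set (Fin n → ℝ) :=
  {v | ∀ y ∈ Ω, ∀ γ₁ γ₂ : ℝ → Pt d, IsCurve Ω x y γ₁ → IsCurve Ω x y γ₂ →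
    ∀ w₁ w₂ : Fin n → ℝ, Transports B γ₁ v w₁ → Transports B γ₂ v w₂ → w₁ = w₂}

/-- A continuous vector field on `Ω` is conservative if its circulation along `C¹` curves
in `Ω` depends only on the endpoints. -/
def IsConservativeVF {d : ℕ} (Ω : Set (Pt d)) (b : Pt d → Fin d → ℝ) : Prop :=
  ∀ x ∈ Ω, ∀ y ∈ Ω, ∀ γ₁ γ₂ : ℝ → Pt d, IsCurve Ω x y γ₁ → IsCurve Ω x y γ₂ →
    (∫ t in (0:ℝ)..1, ∑ j, b (γ₁ t) j * (derivWithin γ₁ (Set.Icc 0 1) t) j) =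
    (∫ t in (0:ℝ)..1, ∑ j, b (γ₂ t) j * (derivWithin γ₂ (Set.Icc 0 1) t) j)

namespace Stmt17

noncomputable def circ {d : ℕ} (c : Pt d → Fin d → ℝ) (γ : ℝ → Pt d) : ℝ :=
  ∫ t in (0:ℝ)..1, ∑ j, c (γ t) j * (derivWithin γ (Set.Icc 0 1) t) j

def clamp (t : ℝ) : ℝ := max 0 (min t 1)

lemma clamp_mem (t : ℝ) : clamp t ∈ Set.Icc (0:ℝ) 1 := by
  constructor
  · exact le_max_left _ _
  · exact max_le (by norm_num) (min_le_right _ _)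

lemma clamp_eq {t : ℝ} (ht : t ∈ Set.Icc (0:ℝ) 1) : clamp t = t := by
  have := ht.1; have := ht.2
  simp [clamp, min_eq_left ht.2, max_eq_right ht.1]

lemma continuous_clamp : Continuous clamp :=
  continuous_const.max (continuous_id.min continuous_const)

variable {d : ℕ} {Ω : Set (Pt d)} {x y : Pt d} {γ : ℝ → Pt d} {c : Pt d → Fin d → ℝ}

noncomputable def Gf (c : Pt d → Fin d → ℝ) (γ : ℝ → Pt d) (t : ℝ) : ℝ :=
  ∑ j, c (γ (clamp t)) j * (derivWithin γ (Set.Icc 0 1) (clamp t)) j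

lemma deriv_cont (h : IsCurve Ω x y γ) :
    ContinuousOn (derivWithin γ (Set.Icc 0 1)) (Set.Icc 0 1) :=
  h.1.continuousOn_derivWithin (uniqueDiffOn_Icc one_pos) le_rfl

lemma Gf_cont (h : IsCurve Ω x y γ) (hc : ContinuousOn c (closure Ω)) :
    Continuous (Gf c γ) := by
  have hmaps : Set.MapsTo γ (Set.Icc 0 1) (closure Ω) := fun t ht => subset_closure (h.2.1 t ht)
  have hK : ContinuousOn (fun s => ∑ j, c (γ s) j * (derivWithin γ (Set.Icc 0 1) s) j)
      (Set.Icc (0:ℝ) 1) := by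
    apply continuousOn_finset_sum
    intro j _
    exact ((continuous_apply j).comp_continuousOn
        (hc.comp h.1.continuousOn hmaps)).mul
      ((PiLp.continuous_apply 2 (fun _ : Fin d => ℝ) j).comp_continuousOn (deriv_cont h))
  exact hK.comp_continuous continuous_clamp clamp_mem

lemma Gf_eq {t : ℝ} (ht : t ∈ Set.Icc (0:ℝ) 1) :
    Gf c γ t = ∑ j, c (γ t) j * (derivWithin γ (Set.Icc 0 1) t) j := by
  rw [Gf, clamp_eq ht]

lemma circ_eq_integral_Gf : circ c γ = ∫ t in (0:ℝ)..1, Gf c γ t := by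
  refine (intervalIntegral.integral_congr fun t ht => ?_).symm
  rw [Set.uIcc_of_le zero_le_one] at ht
  exact Gf_eq ht

noncomputable def If (c : Pt d → Fin d → ℝ) (γ : ℝ → Pt d) (t : ℝ) : ℝ :=
  ∫ s in (0:ℝ)..t, Gf c γ s

lemma If_hasDerivAt (h : IsCurve Ω x y γ) (hc : ContinuousOn c (closure Ω)) (t : ℝ) :
    HasDerivAt (If c γ) (Gf c γ t) t :=
  ((Gf_cont h hc).integral_hasStrictDerivAt 0 t).hasDerivAt

lemma If_zero : If c γ 0 = 0 := intervalIntegral.integral_same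

lemma If_one : If c γ 1 = circ c γ := circ_eq_integral_Gf.symm


section Transport

variable {d n : ℕ} {Ω : Set (Pt d)} {x y : Pt d} {γ : ℝ → Pt d}
  {b : Fin n → Pt d → Fin d → ℝ}

lemma target_eq (b : Fin n → Pt d → Fin d → ℝ) (p : Pt d) (φv : Fin n → ℝ)
    (dg : Fin d → ℝ) (i : Fin n) :
    - ∑ j, ∑ l, (if l = i then b i p j else 0) * φv l * dg j
      = -(∑ j, b i p j * dg j) * φv i := by
  simp only [ite_mul, zero_mul, Finset.sum_ite_eq', Finset.mem_univ, if_true]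
  rw [neg_mul, neg_inj, Finset.sum_mul]
  exact Finset.sum_congr rfl fun j _ => by ring

lemma transports_eq (hb : ∀ i, ContinuousOn (b i) (closure Ω)) (h : IsCurve Ω x y γ)
    {v w : Fin n → ℝ}
    (hT : Transports (fun p i j l => if l = i then b i p j else 0) γ v w) :
    w = fun i => v i * Real.exp (-(circ (b i) γ)) := by
  obtain ⟨φ, hs, h0, h1⟩ := hT
  funext i
  set I : ℝ → ℝ := If (b i) γ with hI
  have hψ : ∀ t ∈ Set.Icc (0:ℝ) 1,
      HasDerivWithinAt (fun t => φ t i * Real.exp (I t)) 0 (Set.Icc 0 1) t := by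
    intro t ht
    have hφi := hasDerivWithinAt_pi.1 (hs t ht) i
    rw [target_eq] at hφi
    have hGe : (∑ j, b i (γ t) j * (derivWithin γ (Set.Icc 0 1) t) j) = Gf (b i) γ t :=
      (Gf_eq ht).symm
    rw [hGe] at hφi
    have hIt : HasDerivWithinAt I (Gf (b i) γ t) (Set.Icc 0 1) t :=
      (If_hasDerivAt h (hb i) t).hasDerivWithinAt
    have hexp : HasDerivWithinAt (fun t => Real.exp (I t))
        (Real.exp (I t) * Gf (b i) γ t) (Set.Icc 0 1) t := hIt.exp
    have := hφi.mul hexp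
    refine this.congr_deriv ?_
    ring
  have hdiff : DifferentiableOn ℝ (fun t => φ t i * Real.exp (I t)) (Set.Icc 0 1) :=
    fun t ht => (hψ t ht).differentiableWithinAt
  have hzero : ∀ t ∈ Set.Ico (0:ℝ) 1,
      derivWithin (fun t => φ t i * Real.exp (I t)) (Set.Icc 0 1) t = 0 := fun t ht =>
    (hψ t (Set.Ico_subset_Icc_self ht)).derivWithin
      ((uniqueDiffOn_Icc one_pos) t (Set.Ico_subset_Icc_self ht))
  have hconst := constant_of_derivWithin_zero hdiff hzero 1 (Set.right_mem_Icc.2 zero_le_one)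
  simp only [h0, h1] at hconst
  rw [hI, If_zero, Real.exp_zero, mul_one, If_one] at hconst
  rw [Real.exp_neg, ← hconst]
  field_simp

lemma transports_exists (hb : ∀ i, ContinuousOn (b i) (closure Ω)) (h : IsCurve Ω x y γ)
    (v : Fin n → ℝ) :
    Transports (fun p i j l => if l = i then b i p j else 0) γ v
      (fun i => v i * Real.exp (-(circ (b i) γ))) := by
  refine ⟨fun t i => v i * Real.exp (-(If (b i) γ t)), ?_, ?_, ?_⟩
  · intro t ht
    apply hasDerivWithinAt_pi.2
    intro i
    have hIt : HasDerivWithinAt (If (b i) γ) (Gf (b i) γ t) (Set.Icc 0 1) t :=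
      (If_hasDerivAt h (hb i) t).hasDerivWithinAt
    have hcand : HasDerivWithinAt (fun t => v i * Real.exp (-(If (b i) γ t)))
        (v i * (Real.exp (-(If (b i) γ t)) * -(Gf (b i) γ t))) (Set.Icc 0 1) t :=
      (hIt.neg.exp).const_mul (v i)
    refine hcand.congr_deriv ?_
    rw [target_eq]
    rw [← Gf_eq ht]
    ring
  · funext i; simp only []; rw [If_zero, neg_zero, Real.exp_zero, mul_one]
  · funext i; simp only []; rw [If_one]

end Transport

section Geom

variable {d : ℕ} {Ω : Set (Pt d)} {x y : Pt d} {γ : ℝ → Pt d}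

/-- C¹ curve with vanishing endpoint derivatives. -/
def Good (Ω : Set (Pt d)) (x y : Pt d) (γ : ℝ → Pt d) : Prop :=
  IsCurve Ω x y γ ∧ derivWithin γ (Set.Icc 0 1) 0 = 0 ∧ derivWithin γ (Set.Icc 0 1) 1 = 0

def rho (t : ℝ) : ℝ := 3*t^2 - 2*t^3

lemma rho_zero : rho 0 = 0 := by norm_num [rho]
lemma rho_one : rho 1 = 1 := by norm_num [rho]

lemma hasDerivAt_rho (t : ℝ) : HasDerivAt rho (6*t - 6*t^2) t := by
  have h := (((hasDerivAt_pow 2 t).const_mul (3:ℝ)).sub ((hasDerivAt_pow 3 t).const_mul (2:ℝ)))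
  refine h.congr_deriv ?_
  push_cast
  ring

lemma rho_contDiff : ContDiff ℝ 1 rho :=
  (contDiff_const.mul (contDiff_id.pow 2)).sub (contDiff_const.mul (contDiff_id.pow 3))

lemma rho_mapsTo : Set.MapsTo rho (Set.Icc (0:ℝ) 1) (Set.Icc (0:ℝ) 1) := by
  intro t ht
  obtain ⟨h0, h1⟩ := ht
  simp only [rho, Set.mem_Icc]
  constructor <;> nlinarith [sq_nonneg t, sq_nonneg (1-t)]

lemma good_const (hx : x ∈ Ω) : Good Ω x x (fun _ => x) := by
  refine ⟨⟨contDiffOn_const, fun t _ => hx, rfl, rfl⟩, ?_, ?_⟩ <;>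
    exact congrFun (derivWithin_fun_const (Set.Icc (0:ℝ) 1) x) _

lemma good_segment {a c z : Pt d} {r : ℝ} (hball : ball z r ⊆ Ω)
    (ha : a ∈ ball z r) (hc : c ∈ ball z r) :
    Good Ω a c (fun t => a + rho t • (c - a)) := by
  have hder : ∀ t : ℝ, HasDerivAt (fun t => a + rho t • (c - a)) ((6*t - 6*t^2) • (c - a)) t :=
    fun t => ((hasDerivAt_rho t).smul_const (c - a)).const_add a
  have hmem : ∀ t ∈ Set.Icc (0:ℝ) 1, a + rho t • (c - a) ∈ Ω := by
    intro t ht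
    have hρ := rho_mapsTo ht
    have heq : a + rho t • (c - a) = (1 - rho t) • a + rho t • c := by module
    rw [heq]
    exact hball ((convex_ball z r) ha hc (by linarith [hρ.2]) hρ.1 (by ring))
  refine ⟨⟨?_, hmem, ?_, ?_⟩, ?_, ?_⟩
  · exact (contDiff_const.add (rho_contDiff.smul contDiff_const)).contDiffOn
  · simp [rho_zero]
  · simp [rho_one]
  · have := ((hder 0).hasDerivWithinAt (s := Set.Icc (0:ℝ) 1)).derivWithin
      (uniqueDiffOn_Icc one_pos 0 (by norm_num))
    rw [this]; norm_num
  · have := ((hder 1).hasDerivWithinAt (s := Set.Icc (0:ℝ) 1)).derivWithin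
      (uniqueDiffOn_Icc one_pos 1 (by norm_num))
    rw [this]; norm_num

lemma exists_good_reparam (h : IsCurve Ω x y γ) :
    ∃ γ' : ℝ → Pt d, Good Ω x y γ' ∧
      ∀ c : Pt d → Fin d → ℝ, ContinuousOn c (closure Ω) → circ c γ' = circ c γ := by
  have hcomp : ∀ t ∈ Set.Icc (0:ℝ) 1, HasDerivWithinAt (γ ∘ rho)
      ((6*t - 6*t^2) • derivWithin γ (Set.Icc 0 1) (rho t)) (Set.Icc 0 1) t := by
    intro t ht
    exact HasDerivWithinAt.scomp_of_eq t
      ((h.1.differentiableOn one_ne_zero (rho t) (rho_mapsTo ht)).hasDerivWithinAt)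
      ((hasDerivAt_rho t).hasDerivWithinAt) rho_mapsTo rfl
  have hd : ∀ t ∈ Set.Icc (0:ℝ) 1, derivWithin (γ ∘ rho) (Set.Icc 0 1) t
      = (6*t - 6*t^2) • derivWithin γ (Set.Icc 0 1) (rho t) :=
    fun t ht => (hcomp t ht).derivWithin (uniqueDiffOn_Icc one_pos t ht)
  refine ⟨γ ∘ rho, ⟨⟨?_, ?_, ?_, ?_⟩, ?_, ?_⟩, ?_⟩
  · exact h.1.comp rho_contDiff.contDiffOn rho_mapsTo
  · exact fun t ht => h.2.1 _ (rho_mapsTo ht)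
  · show γ (rho 0) = x; rw [rho_zero]; exact h.2.2.1
  · show γ (rho 1) = y; rw [rho_one]; exact h.2.2.2
  · rw [hd 0 (by norm_num)]; norm_num
  · rw [hd 1 (by norm_num)]; norm_num
  · intro c hc
    have h1 : circ c (γ ∘ rho) = ∫ t in (0:ℝ)..1, ((Gf c γ) ∘ rho) t * (6*t - 6*t^2) := by
      apply intervalIntegral.integral_congr
      intro t ht
      rw [Set.uIcc_of_le zero_le_one] at ht
      dsimp only [Function.comp_apply]
      rw [hd t ht, Gf_eq (c := c) (rho_mapsTo ht)]
      simp only [Function.comp_apply, PiLp.smul_apply, smul_eq_mul, Finset.sum_mul]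
      exact Finset.sum_congr rfl fun j _ => by ring
    rw [h1, intervalIntegral.integral_comp_mul_deriv''
      (rho_contDiff.continuous.continuousOn)
      (fun t _ => (hasDerivAt_rho t).hasDerivWithinAt)
      ((by fun_prop : Continuous fun t : ℝ => 6*t-6*t^2).continuousOn)
      ((Gf_cont h hc).continuousOn)]
    rw [rho_zero, rho_one]
    exact circ_eq_integral_Gf.symm


lemma hasDerivAt_2t (t : ℝ) : HasDerivAt (fun u : ℝ => 2*u) 2 t := by
  simpa using (hasDerivAt_id t).const_mul (2:ℝ)

lemma good_concat {z : Pt d} {δ : ℝ → Pt d} (hγ : Good Ω x y γ) (hδ : Good Ω y z δ) :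
    ∃ η : ℝ → Pt d, Good Ω x z η ∧
      ∀ c : Pt d → Fin d → ℝ, ContinuousOn c (closure Ω) →
        circ c η = circ c γ + circ c δ := by
  classical
  have U : UniqueDiffOn ℝ (Set.Icc (0:ℝ) 1) := uniqueDiffOn_Icc one_pos
  set η : ℝ → Pt d := fun t => if t ≤ 1/2 then γ (2*t) else δ (2*t - 1) with hηdef
  set D : ℝ → Pt d := fun t => if t ≤ 1/2 then (2:ℝ) • derivWithin γ (Set.Icc 0 1) (min (2*t) 1)
    else (2:ℝ) • derivWithin δ (Set.Icc 0 1) (max (2*t-1) 0) with hDdef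
  have hγd : DifferentiableOn ℝ γ (Set.Icc 0 1) := hγ.1.1.differentiableOn one_ne_zero
  have hδd : DifferentiableOn ℝ δ (Set.Icc 0 1) := hδ.1.1.differentiableOn one_ne_zero
  -- agreement on halves
  have hηL : Set.EqOn η (fun u => γ (2*u)) (Set.Icc 0 (1/2)) := fun u hu => if_pos hu.2
  have hηR : Set.EqOn η (fun u => δ (2*u - 1)) (Set.Icc (1/2) 1) := by
    intro u hu
    by_cases h : u ≤ 1/2
    · have hu2 : u = 1/2 := le_antisymm h hu.1
      subst hu2
      show (if (1:ℝ)/2 ≤ 1/2 then γ (2*(1/2)) else δ (2*(1/2)-1)) = δ (2*(1/2) - 1)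
      rw [if_pos le_rfl, show (2:ℝ)*(1/2) - 1 = 0 by norm_num,
        show (2:ℝ)*(1/2) = 1 by norm_num, hγ.1.2.2.2, hδ.1.2.2.1]
    · simp only [hηdef, if_neg h]
  -- half derivatives
  have hmapsL : Set.MapsTo (fun u : ℝ => 2*u) (Set.Icc 0 (1/2)) (Set.Icc (0:ℝ) 1) := by
    intro u hu; simp only [Set.mem_Icc] at *; constructor <;> linarith [hu.1, hu.2]
  have hmapsR : Set.MapsTo (fun u : ℝ => 2*u - 1) (Set.Icc (1/2) 1) (Set.Icc (0:ℝ) 1) := by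
    intro u hu; simp only [Set.mem_Icc] at *; constructor <;> linarith [hu.1, hu.2]
  have hL : ∀ t ∈ Set.Icc (0:ℝ) (1/2), HasDerivWithinAt η
      ((2:ℝ) • derivWithin γ (Set.Icc 0 1) (2*t)) (Set.Icc 0 (1/2)) t := by
    intro t ht
    have h2t : (2:ℝ)*t ∈ Set.Icc (0:ℝ) 1 := hmapsL ht
    exact (HasDerivWithinAt.scomp_of_eq t ((hγd _ h2t).hasDerivWithinAt)
      ((hasDerivAt_2t t).hasDerivWithinAt) hmapsL rfl).congr hηL (hηL ht)
  have hR : ∀ t ∈ Set.Icc (1/2:ℝ) 1, HasDerivWithinAt η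
      ((2:ℝ) • derivWithin δ (Set.Icc 0 1) (2*t - 1)) (Set.Icc (1/2) 1) t := by
    intro t ht
    have h2t : (2:ℝ)*t - 1 ∈ Set.Icc (0:ℝ) 1 := hmapsR ht
    exact (HasDerivWithinAt.scomp_of_eq t ((hδd _ h2t).hasDerivWithinAt)
      (((hasDerivAt_2t t).sub_const 1).hasDerivWithinAt) hmapsR rfl).congr hηR (hηR ht)
  -- full derivative
  have hD : ∀ t ∈ Set.Icc (0:ℝ) 1, HasDerivWithinAt η (D t) (Set.Icc 0 1) t := by
    intro t ht
    rcases lt_trichotomy t (1/2) with hlt | heq | hgt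
    · have ht' : t ∈ Set.Icc (0:ℝ) (1/2) := ⟨ht.1, hlt.le⟩
      have h1 : HasDerivWithinAt η ((2:ℝ) • derivWithin γ (Set.Icc 0 1) (2*t))
          (Set.Icc 0 1 ∩ Set.Iio (1/2)) t :=
        (hL t ht').mono (fun u hu => ⟨hu.1.1, hu.2.le⟩)
      have h2 := (hasDerivWithinAt_inter (Iio_mem_nhds hlt)).mp h1
      have hDt : D t = (2:ℝ) • derivWithin γ (Set.Icc 0 1) (2*t) := by
        rw [hDdef]
        simp only [if_pos hlt.le, min_eq_left (by linarith [ht'.2] : (2:ℝ)*t ≤ 1)]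
      rwa [hDt]
    · subst heq
      have hLL : HasDerivWithinAt η 0 (Set.Icc 0 (1/2)) (1/2) := by
        have := hL (1/2) ⟨by norm_num, le_rfl⟩
        rw [show (2:ℝ)*(1/2) = 1 by norm_num, hγ.2.2, smul_zero] at this
        exact this
      have hRR : HasDerivWithinAt η 0 (Set.Icc (1/2) 1) (1/2) := by
        have := hR (1/2) ⟨le_rfl, by norm_num⟩
        rw [show (2:ℝ)*(1/2) - 1 = 0 by norm_num, hδ.2.1, smul_zero] at this
        exact this
      have hU := hLL.union hRR
      rw [Set.Icc_union_Icc_eq_Icc (by norm_num) (by norm_num)] at hU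
      have hDt : D (1/2 : ℝ) = 0 := by
        rw [hDdef]
        simp only [if_pos le_rfl]
        rw [show min ((2:ℝ)*(1/2)) 1 = 1 by norm_num, hγ.2.2, smul_zero]
      rwa [hDt]
    · have ht' : t ∈ Set.Icc (1/2:ℝ) 1 := ⟨hgt.le, ht.2⟩
      have h1 : HasDerivWithinAt η ((2:ℝ) • derivWithin δ (Set.Icc 0 1) (2*t - 1))
          (Set.Icc 0 1 ∩ Set.Ioi (1/2)) t :=
        (hR t ht').mono (fun u hu => ⟨hu.2.le, hu.1.2⟩)
      have h2 := (hasDerivWithinAt_inter (Ioi_mem_nhds hgt)).mp h1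
      have hDt : D t = (2:ℝ) • derivWithin δ (Set.Icc 0 1) (2*t - 1) := by
        rw [hDdef]
        simp only [if_neg (not_le.mpr hgt), max_eq_left (by linarith [ht.1] : (0:ℝ) ≤ 2*t - 1)]
      rwa [hDt]
  have hDeq : ∀ t ∈ Set.Icc (0:ℝ) 1, derivWithin η (Set.Icc 0 1) t = D t :=
    fun t ht => (hD t ht).derivWithin (U t ht)
  -- continuity of D
  have hminmaps : Set.MapsTo (fun t : ℝ => min (2*t) 1) (Set.Icc 0 1) (Set.Icc (0:ℝ) 1) := by
    intro u hu; simp only [Set.mem_Icc] at *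
    exact ⟨le_min (by linarith [hu.1]) zero_le_one, min_le_right _ _⟩
  have hmaxmaps : Set.MapsTo (fun t : ℝ => max (2*t-1) 0) (Set.Icc 0 1) (Set.Icc (0:ℝ) 1) := by
    intro u hu; simp only [Set.mem_Icc] at *
    exact ⟨le_max_right _ _, max_le (by linarith [hu.2]) zero_le_one⟩
  have hA : ContinuousOn (fun t : ℝ => (2:ℝ) • derivWithin γ (Set.Icc 0 1) (min (2*t) 1))
      (Set.Icc 0 1) := continuousOn_const.fun_smul
    ((deriv_cont hγ.1).comp ((continuous_const.mul continuous_id).min continuous_const).continuousOn hminmaps)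
  have hC : ContinuousOn (fun t : ℝ => (2:ℝ) • derivWithin δ (Set.Icc 0 1) (max (2*t-1) 0))
      (Set.Icc 0 1) := continuousOn_const.fun_smul
    ((deriv_cont hδ.1).comp (((continuous_const.mul continuous_id).sub continuous_const).max continuous_const).continuousOn hmaxmaps)
  have hAC : ∀ u : ℝ, u = 1/2 →
      (2:ℝ) • derivWithin γ (Set.Icc 0 1) (min (2*u) 1) = (2:ℝ) • derivWithin δ (Set.Icc 0 1) (max (2*u-1) 0) := by
    intro u hu; subst hu
    rw [show min ((2:ℝ)*(1/2)) 1 = 1 by norm_num, show max ((2:ℝ)*(1/2)-1) 0 = 0 by norm_num,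
      hγ.2.2, hδ.2.1]
  have hDcont : ContinuousOn D (Set.Icc 0 1) := by
    have hDA : Set.EqOn D (fun t : ℝ => (2:ℝ) • derivWithin γ (Set.Icc 0 1) (min (2*t) 1))
        (Set.Icc 0 (1/2)) := fun u hu => if_pos hu.2
    have hDC : Set.EqOn D (fun t : ℝ => (2:ℝ) • derivWithin δ (Set.Icc 0 1) (max (2*t-1) 0))
        (Set.Icc (1/2) 1) := by
      intro u hu
      by_cases h : u ≤ 1/2
      · have hu2 : u = 1/2 := le_antisymm h hu.1
        subst hu2
        show (if (1:ℝ)/2 ≤ 1/2 then _ else _) = _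
        rw [if_pos le_rfl]
        exact hAC _ rfl
      · simp only [hDdef, if_neg h]
    intro u hu
    have hu01 : (0:ℝ) ≤ u ∧ u ≤ 1 := ⟨hu.1, hu.2⟩
    apply ContinuousWithinAt.mono (t := Set.Icc 0 (1/2) ∪ Set.Icc (1/2) 1)
    swap
    · rw [Set.Icc_union_Icc_eq_Icc (by norm_num) (by norm_num)]
    apply continuousWithinAt_union.2
    constructor
    · by_cases h : u ∈ Set.Icc (0:ℝ) (1/2)
      · exact ((hA u ⟨h.1, by linarith [h.2]⟩).mono
          (Set.Icc_subset_Icc_right (by norm_num))).congr hDA (hDA h)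
      · exact continuousWithinAt_of_notMem_closure (by rwa [isClosed_Icc.closure_eq])
    · by_cases h : u ∈ Set.Icc (1/2:ℝ) 1
      · exact ((hC u ⟨by linarith [h.1], h.2⟩).mono
          (Set.Icc_subset_Icc_left (by norm_num))).congr hDC (hDC h)
      · exact continuousWithinAt_of_notMem_closure (by rwa [isClosed_Icc.closure_eq])
  have hηcont : ContinuousOn η (Set.Icc (0:ℝ) 1) := fun t ht => (hD t ht).continuousWithinAt
  have hηdiff : DifferentiableOn ℝ η (Set.Icc 0 1) := fun t ht => (hD t ht).differentiableWithinAt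
  have hηC1 : ContDiffOn ℝ 1 η (Set.Icc 0 1) := by
    rw [show (1 : WithTop ℕ∞) = 0 + 1 from (zero_add 1).symm, contDiffOn_succ_iff_derivWithin U]
    refine ⟨hηdiff, ?_, ?_⟩
    · intro h; simp at h
    · rw [contDiffOn_zero]
      exact hDcont.congr hDeq
  have hmemη : ∀ t ∈ Set.Icc (0:ℝ) 1, η t ∈ Ω := by
    intro t ht
    by_cases h : t ≤ 1/2
    · simp only [hηdef, if_pos h]; exact hγ.1.2.1 _ (hmapsL ⟨ht.1, h⟩)
    · simp only [hηdef, if_neg h]; exact hδ.1.2.1 _ (hmapsR ⟨(not_le.mp h).le, ht.2⟩)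
  have hgood : Good Ω x z η := by
    refine ⟨⟨hηC1, hmemη, ?_, ?_⟩, ?_, ?_⟩
    · show (if (0:ℝ) ≤ 1/2 then γ (2*0) else δ (2*0-1)) = x
      rw [if_pos (by norm_num : (0:ℝ) ≤ 1/2), show (2:ℝ)*0 = 0 by norm_num]
      exact hγ.1.2.2.1
    · show (if (1:ℝ) ≤ 1/2 then γ (2*1) else δ (2*1-1)) = z
      rw [if_neg (by norm_num : ¬((1:ℝ) ≤ 1/2)), show (2:ℝ)*1 - 1 = 1 by norm_num]
      exact hδ.1.2.2.2
    · rw [hDeq 0 (by norm_num), hDdef]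
      simp only [if_pos (by norm_num : (0:ℝ) ≤ 1/2)]
      rw [show min ((2:ℝ)*0) 1 = 0 by norm_num, hγ.2.1, smul_zero]
    · rw [hDeq 1 (by norm_num), hDdef]
      simp only [if_neg (by norm_num : ¬((1:ℝ) ≤ 1/2))]
      rw [show max ((2:ℝ)*1 - 1) 0 = 1 by norm_num, hδ.2.2, smul_zero]
  refine ⟨η, hgood, ?_⟩
  intro c hc
  have hFcont : ContinuousOn
      (fun t => ∑ j, c (η t) j * (derivWithin η (Set.Icc 0 1) t) j) (Set.Icc (0:ℝ) 1) := by
    apply continuousOn_finset_sum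
    intro j _
    exact ((continuous_apply j).comp_continuousOn
        (hc.comp hηcont (fun t ht => subset_closure (hmemη t ht)))).mul
      ((PiLp.continuous_apply 2 (fun _ : Fin d => ℝ) j).comp_continuousOn (hDcont.congr hDeq))
  have hsub1 : Set.uIcc (0:ℝ) (1/2) ⊆ Set.Icc (0:ℝ) 1 := by
    rw [Set.uIcc_of_le (by norm_num : (0:ℝ) ≤ 1/2)]
    exact Set.Icc_subset_Icc_right (by norm_num)
  have hsub2 : Set.uIcc (1/2:ℝ) 1 ⊆ Set.Icc (0:ℝ) 1 := by
    rw [Set.uIcc_of_le (by norm_num : (1/2:ℝ) ≤ 1)]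
    exact Set.Icc_subset_Icc_left (by norm_num)
  have hint1 : IntervalIntegrable
      (fun t => ∑ j, c (η t) j * (derivWithin η (Set.Icc 0 1) t) j) volume 0 (1/2) :=
    (hFcont.mono hsub1).intervalIntegrable
  have hint2 : IntervalIntegrable
      (fun t => ∑ j, c (η t) j * (derivWithin η (Set.Icc 0 1) t) j) volume (1/2) 1 :=
    (hFcont.mono hsub2).intervalIntegrable
  have hsplit := intervalIntegral.integral_add_adjacent_intervals hint1 hint2
  have hleft : (∫ t in (0:ℝ)..(1/2), ∑ j, c (η t) j * (derivWithin η (Set.Icc 0 1) t) j)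
      = circ c γ := by
    have e1 : (∫ t in (0:ℝ)..(1/2), ∑ j, c (η t) j * (derivWithin η (Set.Icc 0 1) t) j)
        = ∫ t in (0:ℝ)..(1/2), 2 * Gf c γ (2*t) := by
      apply intervalIntegral.integral_congr
      intro t ht
      rw [Set.uIcc_of_le (by norm_num : (0:ℝ) ≤ 1/2)] at ht
      have ht1 : t ∈ Set.Icc (0:ℝ) 1 := ⟨ht.1, by linarith [ht.2]⟩
      have h2t : (2:ℝ)*t ∈ Set.Icc (0:ℝ) 1 := hmapsL ht
      have hη : η t = γ (2*t) := if_pos ht.2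
      have hDt : derivWithin η (Set.Icc 0 1) t = (2:ℝ) • derivWithin γ (Set.Icc 0 1) (2*t) := by
        rw [hDeq t ht1, hDdef]
        simp only [if_pos ht.2, min_eq_left (by linarith [ht.2] : (2:ℝ)*t ≤ 1)]
      simp only []
      rw [hη, hDt, Gf_eq h2t, Finset.mul_sum]
      simp only [PiLp.smul_apply, smul_eq_mul]
      exact Finset.sum_congr rfl fun j _ => by ring
    rw [e1, intervalIntegral.integral_const_mul,
      intervalIntegral.integral_comp_mul_left (f := Gf c γ) (by norm_num : (2:ℝ) ≠ 0)]
    norm_num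
    rw [← circ_eq_integral_Gf]
    ring
  have hright : (∫ t in (1/2:ℝ)..1, ∑ j, c (η t) j * (derivWithin η (Set.Icc 0 1) t) j)
      = circ c δ := by
    have e1 : (∫ t in (1/2:ℝ)..1, ∑ j, c (η t) j * (derivWithin η (Set.Icc 0 1) t) j)
        = ∫ t in (1/2:ℝ)..1, 2 * Gf c δ (2*t - 1) := by
      apply intervalIntegral.integral_congr
      intro t ht
      rw [Set.uIcc_of_le (by norm_num : (1/2:ℝ) ≤ 1)] at ht
      have ht1 : t ∈ Set.Icc (0:ℝ) 1 := ⟨by linarith [ht.1], ht.2⟩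
      have h2t : (2:ℝ)*t - 1 ∈ Set.Icc (0:ℝ) 1 := hmapsR ht
      have hη : η t = δ (2*t - 1) := hηR ht
      have hDt : derivWithin η (Set.Icc 0 1) t
          = (2:ℝ) • derivWithin δ (Set.Icc 0 1) (2*t - 1) := by
        rw [hDeq t ht1]
        rcases lt_or_eq_of_le ht.1 with h' | h'
        · rw [hDdef]
          simp only [if_neg (not_le.mpr h'),
            max_eq_left (by linarith [ht.1] : (0:ℝ) ≤ 2*t - 1)]
        · rw [hDdef, ← h']
          simp only [if_pos le_rfl]
          rw [show min ((2:ℝ)*(1/2)) 1 = 1 by norm_num,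
            show (2:ℝ)*(1/2) - 1 = 0 by norm_num, hγ.2.2, hδ.2.1]
      simp only []
      rw [hη, hDt, Gf_eq h2t, Finset.mul_sum]
      simp only [PiLp.smul_apply, smul_eq_mul]
      exact Finset.sum_congr rfl fun j _ => by ring
    rw [e1, intervalIntegral.integral_const_mul,
      intervalIntegral.integral_comp_mul_sub (f := Gf c δ) (by norm_num : (2:ℝ) ≠ 0) 1]
    norm_num
    rw [← circ_eq_integral_Gf]
    ring
  rw [show circ c η = ∫ t in (0:ℝ)..1, ∑ j, c (η t) j * (derivWithin η (Set.Icc 0 1) t) j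
      from rfl, ← hsplit, hleft, hright]


lemma exists_good (hopen : IsOpen Ω) (hconn : IsConnected Ω) (hx : x ∈ Ω) (hy : y ∈ Ω) :
    ∃ γ : ℝ → Pt d, Good Ω x y γ := by
  classical
  set Uset : Set (Pt d) := {w | ∃ γ : ℝ → Pt d, Good Ω x w γ} with hUdef
  have hUopen : IsOpen Uset := by
    rw [Metric.isOpen_iff]
    rintro w ⟨γw, hw⟩
    have hwΩ : w ∈ Ω := hw.1.2.2.2 ▸ hw.1.2.1 1 (by norm_num)
    obtain ⟨r, hr, hball⟩ := Metric.isOpen_iff.mp hopen w hwΩ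
    refine ⟨r, hr, fun w' hw' => ?_⟩
    obtain ⟨η, hη, -⟩ := good_concat hw (good_segment hball (mem_ball_self hr) hw')
    exact ⟨η, hη⟩
  set Vset : Set (Pt d) := {w | w ∈ Ω ∧ w ∉ Uset} with hVdef
  have hVopen : IsOpen Vset := by
    rw [Metric.isOpen_iff]
    rintro w ⟨hwΩ, hwU⟩
    obtain ⟨r, hr, hball⟩ := Metric.isOpen_iff.mp hopen w hwΩ
    refine ⟨r, hr, fun w' hw' => ⟨hball hw', ?_⟩⟩
    rintro ⟨γ', hγ'⟩
    apply hwU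
    obtain ⟨η, hη, -⟩ := good_concat hγ' (good_segment hball hw' (mem_ball_self hr))
    exact ⟨η, hη⟩
  by_contra hne
  have hsub : Ω ⊆ Uset ∪ Vset := fun w hw => by
    by_cases h : w ∈ Uset
    · exact Or.inl h
    · exact Or.inr ⟨hw, h⟩
  have hxU : (Ω ∩ Uset).Nonempty := ⟨x, hx, ⟨_, good_const hx⟩⟩
  have hyV : (Ω ∩ Vset).Nonempty := ⟨y, hy, ⟨hy, fun h => hne h⟩⟩
  obtain ⟨w, -, hw1, hw2⟩ := hconn.isPreconnected Uset Vset hUopen hVopen hsub hxU hyV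
  exact hw2.2 hw1

lemma span_finrank {n k : ℕ} (hk : k ≤ n) :
    Module.finrank ℝ (Submodule.span ℝ
      {v : Fin n → ℝ | ∀ i : Fin n, k ≤ (i : ℕ) → v i = 0}) = k := by
  classical
  set J : (Fin k → ℝ) →ₗ[ℝ] (Fin n → ℝ) :=
    { toFun := fun u i => if h : (i : ℕ) < k then u ⟨i, h⟩ else 0,
      map_add' := by intro u v; funext i; by_cases h : (i : ℕ) < k <;> simp [h],
      map_smul' := by intro r u; funext i; by_cases h : (i : ℕ) < k <;> simp [h] } with hJdef
  have hinj : Function.Injective J := by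
    intro u v huv
    funext j
    have h1 := congrFun huv ⟨(j : ℕ), lt_of_lt_of_le j.2 hk⟩
    simpa [hJdef, j.2] using h1
  have hset : {v : Fin n → ℝ | ∀ i : Fin n, k ≤ (i : ℕ) → v i = 0}
      = ↑(LinearMap.range J) := by
    ext v
    constructor
    · intro hv
      refine ⟨fun j => v (Fin.castLE hk j), ?_⟩
      funext i
      show (if h : (i : ℕ) < k then v (Fin.castLE hk ⟨(i : ℕ), h⟩) else 0) = v i
      by_cases h : (i : ℕ) < k
      · rw [dif_pos h]
        congr 1
      · rw [dif_neg h]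
        exact (hv i (not_lt.mp h)).symm
    · rintro ⟨u, rfl⟩
      intro i hi
      show (if h : (i : ℕ) < k then u ⟨(i : ℕ), h⟩ else 0) = 0
      rw [dif_neg (not_lt.mpr hi)]
  rw [hset, Submodule.span_eq, LinearMap.finrank_range_of_inj hinj]
  simp

end Geom
end Stmt17

/-- diagonal tensor field built from `k` conservative and `n-k`
non-conservative vector fields is `k`-conservative, with
`E_B^x = span{e_1, …, e_k}` everywhere. -/


theorem diagonal_tensor_k_conservative
    {d n k : ℕ} (hd : 2 ≤ d) (hk : k ≤ n)
    (Ω : Set (Pt d)) (hΩ : IsLipschitzDomain Ω)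
    (b : Fin n → Pt d → Fin d → ℝ)
    (hb : ∀ i, ContinuousOn (b i) (closure Ω))
    (hcons : ∀ i : Fin n, (i : ℕ) < k → IsConservativeVF Ω (b i))
    (hncons : ∀ i : Fin n, k ≤ (i : ℕ) → ¬ IsConservativeVF Ω (b i)) :
    (∀ x ∈ Ω, EB Ω (fun x i j l => if l = i then b i x j else 0) x
        = {v : Fin n → ℝ | ∀ i : Fin n, k ≤ (i : ℕ) → v i = 0}) ∧
    (∀ x ∈ Ω, Module.finrank ℝ (Submodule.span ℝ
        (EB Ω (fun x i j l => if l = i then b i x j else 0) x)) = k) := by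
  classical
  obtain ⟨hopen, hconn, hbound, -⟩ := hΩ
  have hmain : ∀ x ∈ Ω, EB Ω (fun x i j l => if l = i then b i x j else 0) x
      = {v : Fin n → ℝ | ∀ i : Fin n, k ≤ (i : ℕ) → v i = 0} := by
    intro x hx
    ext v
    constructor
    · intro hv i hik
      by_contra hvi
      apply hncons i hik
      intro x₀ hx₀ y₀ hy₀ σ₁ σ₂ hσ₁ hσ₂
      obtain ⟨α, hα⟩ := Stmt17.exists_good hopen hconn hx hx₀
      obtain ⟨σ₁', hσ₁', hcirc₁⟩ := Stmt17.exists_good_reparam hσ₁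
      obtain ⟨σ₂', hσ₂', hcirc₂⟩ := Stmt17.exists_good_reparam hσ₂
      obtain ⟨η₁, hη₁, hc₁⟩ := Stmt17.good_concat hα hσ₁'
      obtain ⟨η₂, hη₂, hc₂⟩ := Stmt17.good_concat hα hσ₂'
      have hw := hv y₀ hy₀ η₁ η₂ hη₁.1 hη₂.1 _ _
        (Stmt17.transports_exists hb hη₁.1 v) (Stmt17.transports_exists hb hη₂.1 v)
      have hcomp := congrFun hw i
      have hcc : Stmt17.circ (b i) η₁ = Stmt17.circ (b i) η₂ := by
        have h1 := mul_left_cancel₀ hvi hcomp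
        exact neg_injective (Real.exp_eq_exp.mp h1)
      rw [hc₁ (b i) (hb i), hc₂ (b i) (hb i), hcirc₁ (b i) (hb i), hcirc₂ (b i) (hb i)] at hcc
      exact add_left_cancel hcc
    · intro hv y₀ hy₀ γ₁ γ₂ h₁ h₂ w₁ w₂ T₁ T₂
      rw [Stmt17.transports_eq hb h₁ T₁, Stmt17.transports_eq hb h₂ T₂]
      funext i
      by_cases hik : (i : ℕ) < k
      · have hce : Stmt17.circ (b i) γ₁ = Stmt17.circ (b i) γ₂ :=
          hcons i hik x hx y₀ hy₀ γ₁ γ₂ h₁ h₂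
        rw [hce]
      · rw [hv i (not_lt.mp hik)]
        simp
  refine ⟨hmain, fun x hx => ?_⟩
  rw [hmain x hx]
  exact Stmt17.span_finrank hk


end
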